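/- No aligned nontrivial configuration: for any real phases α_{z,x}, if the two single-qubit Bloch vectors of ψ coincide, i.e. x₁ = x₂, y₁ = y₂ and z₁ = z₂, then both Bloch vectors vanish: x₁ = y₁ = z₁ = x₂ = y₂ = z₂ = 0. -/

import Mathlib

open Matrix Complex Finset Kronecker

/-- Pauli X. -/
noncomputable def X2 : Matrix (Fin 2) (Fin 2) ℂ := !![0, 1; 1, 0]

/-- Pauli Y. -/
noncomputable def Y2 : Matrix (Fin 2) (Fin 2) ℂ := !![0, -Complex.I; Complex.I, 0]

/-- Pauli Z. -/
noncomputable def Z2 : Matrix (Fin 2) (Fin 2) ℂ := !![1, 0; 0, -1]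

/-- The inner product ⟨f, g⟩ = Σ conj(f v) g v (antilinear in the first argument). -/
noncomputable def dotc {ι : Type*} [Fintype ι] (f g : ι → ℂ) : ℂ :=
  ∑ v, (starRingEnd ℂ) (f v) * g v

/-- Two-qubit computational basis vector |ab⟩. -/
noncomputable def bv (a b : Fin 2) : Fin 2 × Fin 2 → ℂ := fun p => if p = (a, b) then 1 else 0

/-- Bell state Φ_{0,0} = (|00⟩+|11⟩)/√2. -/
noncomputable def Bell00 : Fin 2 × Fin 2 → ℂ := (Real.sqrt 2 : ℂ)⁻¹ • (bv 0 0 + bv 1 1)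

/-- Bell state Φ_{0,1} = (|00⟩−|11⟩)/√2. -/
noncomputable def Bell01 : Fin 2 × Fin 2 → ℂ := (Real.sqrt 2 : ℂ)⁻¹ • (bv 0 0 - bv 1 1)

/-- Bell state Φ_{1,0} = (|01⟩+|10⟩)/√2. -/
noncomputable def Bell10 : Fin 2 × Fin 2 → ℂ := (Real.sqrt 2 : ℂ)⁻¹ • (bv 0 1 + bv 1 0)

/-- Bell state Φ_{1,1} = (−|01⟩+|10⟩)/√2. -/
noncomputable def Bell11 : Fin 2 × Fin 2 → ℂ := (Real.sqrt 2 : ℂ)⁻¹ • (-(bv 0 1) + bv 1 0)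

/-- The fiducial state ψ = (1/2) Σ_{z,x} e^{iα_{z,x}} Φ_{z,x}. -/
noncomputable def psiF (α : Fin 2 → Fin 2 → ℝ) : Fin 2 × Fin 2 → ℂ :=
  (1 / 2 : ℂ) • (Complex.exp ((α 0 0 : ℝ) * Complex.I) • Bell00 +
    Complex.exp ((α 0 1 : ℝ) * Complex.I) • Bell01 +
    Complex.exp ((α 1 0 : ℝ) * Complex.I) • Bell10 +
    Complex.exp ((α 1 1 : ℝ) * Complex.I) • Bell11)

/-- Bloch component x₁ = ⟨ψ,(X⊗I)ψ⟩. -/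
noncomputable def blochX1 (α : Fin 2 → Fin 2 → ℝ) : ℂ :=
  dotc (psiF α) ((X2 ⊗ₖ (1 : Matrix (Fin 2) (Fin 2) ℂ)) *ᵥ psiF α)

/-- Bloch component y₁ = ⟨ψ,(Y⊗I)ψ⟩. -/
noncomputable def blochY1 (α : Fin 2 → Fin 2 → ℝ) : ℂ :=
  dotc (psiF α) ((Y2 ⊗ₖ (1 : Matrix (Fin 2) (Fin 2) ℂ)) *ᵥ psiF α)

/-- Bloch component z₁ = ⟨ψ,(Z⊗I)ψ⟩. -/
noncomputable def blochZ1 (α : Fin 2 → Fin 2 → ℝ) : ℂ :=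
  dotc (psiF α) ((Z2 ⊗ₖ (1 : Matrix (Fin 2) (Fin 2) ℂ)) *ᵥ psiF α)

/-- Bloch component x₂ = ⟨ψ,(I⊗X)ψ⟩. -/
noncomputable def blochX2 (α : Fin 2 → Fin 2 → ℝ) : ℂ :=
  dotc (psiF α) (((1 : Matrix (Fin 2) (Fin 2) ℂ) ⊗ₖ X2) *ᵥ psiF α)

/-- Bloch component y₂ = ⟨ψ,(I⊗Y)ψ⟩. -/
noncomputable def blochY2 (α : Fin 2 → Fin 2 → ℝ) : ℂ :=
  dotc (psiF α) (((1 : Matrix (Fin 2) (Fin 2) ℂ) ⊗ₖ Y2) *ᵥ psiF α)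

/-- Bloch component z₂ = ⟨ψ,(I⊗Z)ψ⟩. -/
noncomputable def blochZ2 (α : Fin 2 → Fin 2 → ℝ) : ℂ :=
  dotc (psiF α) (((1 : Matrix (Fin 2) (Fin 2) ℂ) ⊗ₖ Z2) *ᵥ psiF α)

/-! With `u z x = exp (i α z x)`, expanding the Bell states gives `2√2 ψ` the computational-basis
amplitudes `(u₀₀ + u₀₁, u₁₀ − u₁₁, u₁₀ + u₁₁, u₀₀ − u₀₁)`, and the Bloch components of the two
qubits come out as `(A ± B) / 2` with a common `A`:
`x = (cos(α₀₀ − α₁₀) ± cos(α₀₁ − α₁₁)) / 2`, `y = (sin(α₁₀ − α₀₁) ∓ sin(α₀₀ − α₁₁)) / 2`,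
`z = (cos(α₀₀ − α₀₁) ∓ cos(α₁₀ − α₁₁)) / 2`.
Equal Bloch vectors kill the three `B`s; measuring all phases from `α₁₁`, the addition formulas
then kill the three `A`s. -/

open ComplexConjugate

lemma dotc_smul_mulVec_smul {ι : Type*} [Fintype ι] (c : ℂ) (M : Matrix ι ι ℂ) (f : ι → ℂ) :
    dotc (c • f) (M *ᵥ (c • f)) = Complex.normSq c * dotc f (M *ᵥ f) := by
  simp only [dotc, mulVec_smul, Pi.smul_apply, smul_eq_mul, map_mul, Finset.mul_sum,
    Complex.normSq_eq_conj_mul_self]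
  exact Finset.sum_congr rfl fun _ _ => by ring

lemma dotc_kronecker_mulVec (ψ : Fin 2 × Fin 2 → ℂ) (A B : Matrix (Fin 2) (Fin 2) ℂ) :
    dotc ψ ((A ⊗ₖ B) *ᵥ ψ) =
      ∑ i, ∑ j, ∑ k, ∑ l, conj (ψ (i, j)) * (A i k * B j l * ψ (k, l)) := by
  simp only [dotc, mulVec, dotProduct, Fintype.sum_prod_type, kroneckerMap_apply, Finset.mul_sum]

lemma cos_ofReal_sub (a b : ℝ) : Complex.cos (a - b) =
    (exp (a * I) * conj (exp (b * I)) + conj (exp (a * I)) * exp (b * I)) / 2 := by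
  simp only [← Complex.exp_conj, map_mul, Complex.conj_ofReal, Complex.conj_I, ← Complex.exp_add,
    Complex.cos]
  ring_nf

lemma sin_ofReal_sub (a b : ℝ) : Complex.sin (a - b) =
    I * (conj (exp (a * I)) * exp (b * I) - exp (a * I) * conj (exp (b * I))) / 2 := by
  simp only [← Complex.exp_conj, map_mul, Complex.conj_ofReal, Complex.conj_I, ← Complex.exp_add,
    Complex.sin]
  ring_nf

lemma Real.cos_sub_eq_zero_of_sin_sub_eq_zero_of_cos_sub_eq_zero {a b c : ℝ}
    (ha : Real.sin (a - c) = 0) (hb : Real.cos (b - c) = 0) : Real.cos (a - b) = 0 := by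
  rw [← sub_sub_sub_cancel_right a b c, Real.cos_sub, ha, hb]
  ring

lemma Real.sin_sub_eq_zero_of_cos_sub_eq_zero_of_cos_sub_eq_zero {a b c : ℝ}
    (ha : Real.cos (a - c) = 0) (hb : Real.cos (b - c) = 0) : Real.sin (a - b) = 0 := by
  rw [← sub_sub_sub_cancel_right a b c, Real.sin_sub, ha, hb]
  ring

noncomputable def psiUnnormalized (α : Fin 2 → Fin 2 → ℝ) : Fin 2 × Fin 2 → ℂ :=
  fun p => ![![exp (α 0 0 * I) + exp (α 0 1 * I), exp (α 1 0 * I) - exp (α 1 1 * I)],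
    ![exp (α 1 0 * I) + exp (α 1 1 * I), exp (α 0 0 * I) - exp (α 0 1 * I)]] p.1 p.2

lemma psiF_eq_smul_psiUnnormalized (α : Fin 2 → Fin 2 → ℝ) :
    psiF α = ((2 * Real.sqrt 2 : ℝ)⁻¹ : ℂ) • psiUnnormalized α := by
  ext ⟨a, b⟩
  fin_cases a <;> fin_cases b <;>
    simp only [psiF, psiUnnormalized, Bell00, Bell01, Bell10, Bell11, bv, Pi.add_apply,
      Pi.sub_apply, Pi.neg_apply, Pi.smul_apply, smul_eq_mul, Prod.mk.injEq, Fin.isValue,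
      zero_ne_one, one_ne_zero, Fin.zero_eta, Fin.mk_one, and_self, and_true, and_false, ↓reduceIte,
      cons_val_zero, cons_val_one, ofReal_mul, ofReal_ofNat] <;> ring

lemma normSq_inv_two_mul_sqrt_two : Complex.normSq ((2 * Real.sqrt 2 : ℝ)⁻¹ : ℂ) = 1 / 8 := by
  rw [← Complex.ofReal_inv, Complex.normSq_ofReal, ← mul_inv, mul_mul_mul_comm,
    Real.mul_self_sqrt zero_le_two]
  norm_num

lemma dotc_psiF_mulVec (α : Fin 2 → Fin 2 → ℝ) (M : Matrix (Fin 2 × Fin 2) (Fin 2 × Fin 2) ℂ) :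
    dotc (psiF α) (M *ᵥ psiF α) = dotc (psiUnnormalized α) (M *ᵥ psiUnnormalized α) / 8 := by
  rw [psiF_eq_smul_psiUnnormalized, dotc_smul_mulVec_smul, normSq_inv_two_mul_sqrt_two]
  push_cast
  ring

lemma blochX1_eq (α : Fin 2 → Fin 2 → ℝ) :
    blochX1 α = ((Real.cos (α 0 0 - α 1 0) + Real.cos (α 0 1 - α 1 1)) / 2 : ℝ) := by
  rw [blochX1, dotc_psiF_mulVec, dotc_kronecker_mulVec]
  push_cast [cos_ofReal_sub]
  simp only [Fin.sum_univ_two, psiUnnormalized, X2, of_apply, cons_val_zero, cons_val_one,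
    one_apply_eq, one_apply_ne zero_ne_one, one_apply_ne one_ne_zero, map_add, map_sub]
  ring

lemma blochX2_eq (α : Fin 2 → Fin 2 → ℝ) :
    blochX2 α = ((Real.cos (α 0 0 - α 1 0) - Real.cos (α 0 1 - α 1 1)) / 2 : ℝ) := by
  rw [blochX2, dotc_psiF_mulVec, dotc_kronecker_mulVec]
  push_cast [cos_ofReal_sub]
  simp only [Fin.sum_univ_two, psiUnnormalized, X2, of_apply, cons_val_zero, cons_val_one,
    one_apply_eq, one_apply_ne zero_ne_one, one_apply_ne one_ne_zero, map_add, map_sub]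
  ring

lemma blochY1_eq (α : Fin 2 → Fin 2 → ℝ) :
    blochY1 α = ((Real.sin (α 1 0 - α 0 1) - Real.sin (α 0 0 - α 1 1)) / 2 : ℝ) := by
  rw [blochY1, dotc_psiF_mulVec, dotc_kronecker_mulVec]
  push_cast [sin_ofReal_sub]
  simp only [Fin.sum_univ_two, psiUnnormalized, Y2, of_apply, cons_val_zero, cons_val_one,
    one_apply_eq, one_apply_ne zero_ne_one, one_apply_ne one_ne_zero, map_add, map_sub]
  ring

lemma blochY2_eq (α : Fin 2 → Fin 2 → ℝ) :
    blochY2 α = ((Real.sin (α 1 0 - α 0 1) + Real.sin (α 0 0 - α 1 1)) / 2 : ℝ) := by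
  rw [blochY2, dotc_psiF_mulVec, dotc_kronecker_mulVec]
  push_cast [sin_ofReal_sub]
  simp only [Fin.sum_univ_two, psiUnnormalized, Y2, of_apply, cons_val_zero, cons_val_one,
    one_apply_eq, one_apply_ne zero_ne_one, one_apply_ne one_ne_zero, map_add, map_sub]
  ring

lemma blochZ1_eq (α : Fin 2 → Fin 2 → ℝ) :
    blochZ1 α = ((Real.cos (α 0 0 - α 0 1) - Real.cos (α 1 0 - α 1 1)) / 2 : ℝ) := by
  rw [blochZ1, dotc_psiF_mulVec, dotc_kronecker_mulVec]
  push_cast [cos_ofReal_sub]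
  simp only [Fin.sum_univ_two, psiUnnormalized, Z2, of_apply, cons_val_zero, cons_val_one,
    one_apply_eq, one_apply_ne zero_ne_one, one_apply_ne one_ne_zero, map_add, map_sub]
  ring

lemma blochZ2_eq (α : Fin 2 → Fin 2 → ℝ) :
    blochZ2 α = ((Real.cos (α 0 0 - α 0 1) + Real.cos (α 1 0 - α 1 1)) / 2 : ℝ) := by
  rw [blochZ2, dotc_psiF_mulVec, dotc_kronecker_mulVec]
  push_cast [cos_ofReal_sub]
  simp only [Fin.sum_univ_two, psiUnnormalized, Z2, of_apply, cons_val_zero, cons_val_one,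
    one_apply_eq, one_apply_ne zero_ne_one, one_apply_ne one_ne_zero, map_add, map_sub]
  ring

theorem stmt9 (α : Fin 2 → Fin 2 → ℝ)
    (hx : blochX1 α = blochX2 α) (hy : blochY1 α = blochY2 α)
    (hz : blochZ1 α = blochZ2 α) :
    blochX1 α = 0 ∧ blochY1 α = 0 ∧ blochZ1 α = 0 ∧
    blochX2 α = 0 ∧ blochY2 α = 0 ∧ blochZ2 α = 0 := by
  simp only [blochX1_eq, blochX2_eq, blochY1_eq, blochY2_eq, blochZ1_eq, blochZ2_eq,
    ofReal_inj, ofReal_eq_zero] at hx hy hz ⊢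
  have hq : Real.cos (α 0 1 - α 1 1) = 0 := by linarith
  have hp : Real.sin (α 0 0 - α 1 1) = 0 := by linarith
  have hr : Real.cos (α 1 0 - α 1 1) = 0 := by linarith
  rw [hq, hp, hr, Real.cos_sub_eq_zero_of_sin_sub_eq_zero_of_cos_sub_eq_zero hp hr,
    Real.cos_sub_eq_zero_of_sin_sub_eq_zero_of_cos_sub_eq_zero hp hq,
    Real.sin_sub_eq_zero_of_cos_sub_eq_zero_of_cos_sub_eq_zero hr hq]
  norm_num
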